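/- arXiv:2006.11726 — 9 statements merged into one kernel-verified Lean document; each statement's English description precedes it below -/
import Mathlib

section
/- Let 0 < a ≤ b, let ε ∈ (0,1), let L ≥ 0, and let g : ℝ → ℝ be differentiable with L-Lipschitz derivative. Define the sequence z_0 = a, z_{i+1} = z_i + √(ε·z_i), and let M = {b} ∪ {z_i : i ∈ ℕ, a ≤ z_i ≤ b} (a finite set). Then sup_{y ∈ [a,b]} g(y)/y ≤ max_{y ∈ M} g(y)/y + ε·L. -/
/-!
Let `y` maximize `g y / y` on `[a, b]`. If `y = b` there is nothing to prove. Otherwise the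
one-sided first-order condition gives `g' y ≤ g y / y`, and the grid point `m = z j ≤ y` below `y`
satisfies `(y - m)² ≤ ε m`, because consecutive grid points are `√(ε z j)` apart. The Lipschitz
bound on `g'` gives `g m ≥ g y - g' y (y - m) - L (y - m)² ≥ (g y / y) m - ε L m`, and dividing
by `m` yields `g y / y ≤ g m / m + ε L`.
-/

open Set

theorem abs_sub_sub_deriv_mul_le {g : ℝ → ℝ} {L : ℝ} (hg : Differentiable ℝ g)
    (hlip : ∀ y y' : ℝ, |deriv g y - deriv g y'| ≤ L * |y - y'|) (x y : ℝ) :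
    |g x - g y - deriv g y * (x - y)| ≤ L * |x - y| ^ 2 := by
  have hL : 0 ≤ L := by simpa using (abs_nonneg _).trans (hlip 0 1)
  have hderiv : ∀ t ∈ uIcc y x,
      HasDerivWithinAt (fun t => g t - deriv g y * t) (deriv g t - deriv g y) (uIcc y x) t :=
    fun t _ => (((hg t).hasDerivAt.sub ((hasDerivAt_id t).const_mul _)).congr_deriv
      (by ring)).hasDerivWithinAt
  have hbound : ∀ t ∈ uIcc y x, ‖deriv g t - deriv g y‖ ≤ L * |x - y| := fun t ht =>
    (hlip t y).trans (mul_le_mul_of_nonneg_left (abs_sub_left_of_mem_uIcc ht) hL)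
  have := (convex_uIcc y x).norm_image_sub_le_of_norm_hasDerivWithin_le hderiv hbound
    left_mem_uIcc right_mem_uIcc
  simp only [Real.norm_eq_abs] at this
  calc |g x - g y - deriv g y * (x - y)|
      = |g x - deriv g y * x - (g y - deriv g y * y)| := by ring_nf
    _ ≤ L * |x - y| * |x - y| := this
    _ = L * |x - y| ^ 2 := by ring

theorem IsLocalMaxOn.hasDerivAt_nonpos_of_Icc {f : ℝ → ℝ} {f' y b : ℝ}
    (hmax : IsLocalMaxOn f (Icc y b) y) (hyb : y < b) (hf : HasDerivAt f f' y) : f' ≤ 0 := by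
  have hcone : b - y ∈ posTangentConeAt (Icc y b) y :=
    sub_mem_posTangentConeAt_of_segment_subset ((convex_Icc y b).segment_subset
      (left_mem_Icc.2 hyb.le) (right_mem_Icc.2 hyb.le))
  have := hmax.hasFDerivWithinAt_nonpos hf.hasFDerivAt.hasFDerivWithinAt hcone
  rw [ContinuousLinearMap.toSpanSingleton_apply, smul_eq_mul] at this
  nlinarith

theorem deriv_mul_le_of_isLocalMaxOn_div {g : ℝ → ℝ} {y b : ℝ} (hy : 0 < y) (hyb : y < b)
    (hg : DifferentiableAt ℝ g y) (hmax : IsLocalMaxOn (fun t => g t / t) (Icc y b) y) :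
    deriv g y * y ≤ g y := by
  have := hmax.hasDerivAt_nonpos_of_Icc hyb (hg.hasDerivAt.div (hasDerivAt_id y) hy.ne')
  rw [div_nonpos_iff] at this
  rcases this with ⟨-, h⟩ | ⟨h, -⟩
  · nlinarith [sq_pos_of_pos hy]
  · simp only [mul_one] at h; linarith

theorem div_le_div_add_of_abs_sub_le {g : ℝ → ℝ} {c y m ε L : ℝ} (hL : 0 ≤ L) (hm : 0 < m)
    (hmy : m ≤ y) (hc : c * y ≤ g y) (hgap : (y - m) ^ 2 ≤ ε * m)
    (htaylor : |g m - g y - c * (m - y)| ≤ L * |m - y| ^ 2) :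
    g y / y ≤ g m / m + ε * L := by
  have hy : 0 < y := hm.trans_le hmy
  have hcr : c * (y - m) ≤ g y / y * (y - m) :=
    mul_le_mul_of_nonneg_right ((le_div_iff₀ hy).2 hc) (sub_nonneg.2 hmy)
  have hrm : g y - g y / y * (y - m) = g y / y * m := by field_simp; ring
  have hL' : L * (y - m) ^ 2 ≤ L * (ε * m) := mul_le_mul_of_nonneg_left hgap hL
  rw [sq_abs, abs_le] at htaylor
  rw [← sub_le_iff_le_add, le_div_iff₀ hm]
  nlinarith [htaylor.1]

theorem exists_le_and_lt_succ {α : Type*} [LinearOrder α] {z : ℕ → α} {y : α} (h0 : z 0 ≤ y)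
    (hn : ∃ n, y < z n) : ∃ j, z j ≤ y ∧ y < z (j + 1) := by
  by_contra! hstep
  obtain ⟨n, hn⟩ := hn
  have hle : ∀ i, z i ≤ y := fun i => by
    induction i with
    | zero => exact h0
    | succ i ih => exact hstep i ih
  exact (hle n).not_gt hn

section Grid

variable {z : ℕ → ℝ} {a ε : ℝ} (hz0 : z 0 = a) (hzs : ∀ i, z (i + 1) = z i + √(ε * z i))
include hz0 hzs

theorem add_mul_sqrt_le_grid (hε : 0 ≤ ε) (i : ℕ) : a + i * √(ε * a) ≤ z i := by
  induction i with
  | zero => simp [hz0]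
  | succ i ih =>
    have hza : a ≤ z i := le_of_add_le_of_nonneg_left ih (by positivity)
    rw [hzs i, Nat.cast_succ]
    nlinarith [Real.sqrt_le_sqrt (mul_le_mul_of_nonneg_left hza hε)]

theorem exists_grid_le_and_sq_sub_le (ha : 0 < a) (hε : 0 < ε) {y : ℝ} (hy : a ≤ y) :
    ∃ j, a ≤ z j ∧ z j ≤ y ∧ (y - z j) ^ 2 ≤ ε * z j := by
  have hgrid := add_mul_sqrt_le_grid hz0 hzs hε.le
  have hstep : 0 < √(ε * a) := Real.sqrt_pos_of_pos (mul_pos hε ha)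
  have hunbounded : ∃ n, y < z n := by
    obtain ⟨n, hn⟩ := exists_nat_gt ((y - a) / √(ε * a))
    rw [div_lt_iff₀ hstep] at hn
    exact ⟨n, by linarith [hgrid n]⟩
  obtain ⟨j, hjy, hyj⟩ := exists_le_and_lt_succ (hz0.trans_le hy) hunbounded
  have haj : a ≤ z j := le_of_add_le_of_nonneg_left (hgrid j) (by positivity)
  rw [hzs j, ← sub_lt_iff_lt_add', Real.lt_sqrt (sub_nonneg.2 hjy)] at hyj
  exact ⟨j, haj, hjy, hyj.le⟩

end Grid

/-- one-coordinate ratio maximization over the grid M. -/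
theorem stmt_0 (a b ε L : ℝ) (g : ℝ → ℝ)
    (ha : 0 < a) (hab : a ≤ b) (hε : ε ∈ Set.Ioo (0 : ℝ) 1) (hL : 0 ≤ L)
    (hg : Differentiable ℝ g)
    (hlip : ∀ y y' : ℝ, |deriv g y - deriv g y'| ≤ L * |y - y'|)
    (z : ℕ → ℝ) (hz0 : z 0 = a)
    (hzs : ∀ i : ℕ, z (i + 1) = z i + Real.sqrt (ε * z i))
    (M : Set ℝ) (hM : M = {b} ∪ {y : ℝ | (∃ i : ℕ, z i = y) ∧ a ≤ y ∧ y ≤ b}) :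
    sSup ((fun y => g y / y) '' Set.Icc a b) ≤ sSup ((fun y => g y / y) '' M) + ε * L := by
  set r : ℝ → ℝ := fun y => g y / y
  have hr : ContinuousOn r (Icc a b) :=
    hg.continuous.continuousOn.div continuousOn_id fun y hy => (ha.trans_le hy.1).ne'
  obtain ⟨y, hy, hmax⟩ := isCompact_Icc.exists_isMaxOn (nonempty_Icc.2 hab) hr
  have hMsub : M ⊆ Icc a b := by
    rw [hM]
    rintro m (rfl | ⟨-, ham, hmb⟩)
    exacts [⟨hab, le_rfl⟩, ⟨ham, hmb⟩]
  have hbdd : BddAbove (r '' M) :=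
    (isCompact_Icc.image_of_continuousOn hr).bddAbove.mono (image_mono hMsub)
  rw [IsGreatest.csSup_eq ⟨mem_image_of_mem r hy, forall_mem_image.2 hmax⟩]
  suffices ∃ m ∈ M, r y ≤ r m + ε * L by
    obtain ⟨m, hm, hym⟩ := this
    linarith [le_csSup hbdd (mem_image_of_mem r hm)]
  have hεL : 0 ≤ ε * L := mul_nonneg hε.1.le hL
  rcases hy.2.eq_or_lt with rfl | hyb
  · exact ⟨y, hM ▸ Or.inl rfl, le_add_of_nonneg_right hεL⟩
  obtain ⟨j, haj, hjy, hgap⟩ := exists_grid_le_and_sq_sub_le hz0 hzs ha hε.1 hy.1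
  refine ⟨z j, hM ▸ Or.inr ⟨⟨j, rfl⟩, haj, hjy.trans hy.2⟩, ?_⟩
  have hmax' : IsLocalMaxOn r (Icc y b) y :=
    (hmax.on_subset (Icc_subset_Icc_left hy.1)).localize
  exact div_le_div_add_of_abs_sub_le hL (ha.trans_le haj) hjy
    (deriv_mul_le_of_isLocalMaxOn_div (ha.trans_le hy.1) hyb (hg y) hmax') hgap
    (abs_sub_sub_deriv_mul_le hg hlip (z j) y)
end

section
/- Let L ≥ 0 and let g : ℝ → ℝ be differentiable with L-Lipschitz derivative. Suppose 0 < y_M ≤ y* and g'(y*)·y* = g(y*). Then g(y*)/y* ≤ g(y_M)/y_M + (y* − y_M)²·L/(2·y_M). -/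
/-!
Put `c = g'(y*)`. Stationarity says that the tangent line of `g` at `y*` is `y ↦ c y`, so
`g(y*)/y* = c`. Since `g'` is `L`-Lipschitz, `g(y) - c y + L/2 (y* - y)²` is antitone on
`[y_M, y*]`, hence `c y_M ≤ g(y_M) + L/2 (y* - y_M)²`; divide by `y_M`.
-/

open Set

theorem sub_le_deriv_mul_sub_add_of_deriv_sub_le {f : ℝ → ℝ} {L a b : ℝ}
    (hf : ∀ t ∈ Icc a b, DifferentiableAt ℝ f t) (hab : a ≤ b)
    (hlip : ∀ t ∈ Icc a b, deriv f t - deriv f b ≤ L * (b - t)) :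
    f b - f a ≤ deriv f b * (b - a) + L / 2 * (b - a) ^ 2 := by
  set φ : ℝ → ℝ := fun t => f t - deriv f b * t + L / 2 * (b - t) ^ 2
  have hφ : ∀ t ∈ Icc a b, HasDerivAt φ (deriv f t - deriv f b - L * (b - t)) t := by
    intro t ht
    have hsq : HasDerivAt (fun t : ℝ => L / 2 * (b - t) ^ 2)
        (L / 2 * (2 * (b - t) ^ 1 * (-1))) t :=
      (((hasDerivAt_id t).const_sub b).pow 2).const_mul (L / 2)
    exact (((hf t ht).hasDerivAt.sub ((hasDerivAt_id t).const_mul (deriv f b))).add hsq).congr_deriv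
      (by ring)
  have hanti : AntitoneOn φ (Icc a b) := by
    refine antitoneOn_of_deriv_nonpos (convex_Icc a b)
      (HasDerivAt.continuousOn fun t ht => hφ t ht)
      (fun t ht => (hφ t (interior_subset ht)).differentiableAt.differentiableWithinAt) ?_
    intro t ht
    rw [(hφ t (interior_subset ht)).deriv]
    linarith [hlip t (interior_subset ht)]
  have hφab : φ b ≤ φ a := hanti (left_mem_Icc.mpr hab) (right_mem_Icc.mpr hab) hab
  simp only [φ, sub_self] at hφab
  linarith

theorem stmt_1_general (L : ℝ) (g : ℝ → ℝ)
    (hg : Differentiable ℝ g)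
    (hlip : ∀ y y' : ℝ, |deriv g y - deriv g y'| ≤ L * |y - y'|)
    (yM ystar : ℝ) (hyM : 0 < yM) (hle : yM ≤ ystar)
    (hopt : deriv g ystar * ystar = g ystar) :
    g ystar / ystar ≤ g yM / yM + (ystar - yM) ^ 2 * L / (2 * yM) := by
  have hgap : g ystar - g yM ≤ deriv g ystar * (ystar - yM) + L / 2 * (ystar - yM) ^ 2 := by
    refine sub_le_deriv_mul_sub_add_of_deriv_sub_le (fun t _ => hg t) hle fun t ht => ?_
    have := (abs_le.mp (hlip t ystar)).2
    rwa [abs_of_nonpos (sub_nonpos.mpr ht.2), neg_sub] at this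
  have htangent : deriv g ystar * yM ≤ g yM + L / 2 * (ystar - yM) ^ 2 := by linarith
  calc g ystar / ystar = deriv g ystar * yM / yM := by
        rw [mul_div_cancel_right₀ _ hyM.ne', div_eq_iff (hyM.trans_le hle).ne', hopt]
    _ ≤ (g yM + L / 2 * (ystar - yM) ^ 2) / yM := by gcongr
    _ = g yM / yM + (ystar - yM) ^ 2 * L / (2 * yM) := by ring

/-- ratio bound at a first-order stationary point of y ↦ g(y)/y. -/
theorem stmt_1 (L : ℝ) (hL : 0 ≤ L) (g : ℝ → ℝ)
    (hg : Differentiable ℝ g)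
    (hlip : ∀ y y' : ℝ, |deriv g y - deriv g y'| ≤ L * |y - y'|)
    (yM ystar : ℝ) (hyM : 0 < yM) (hle : yM ≤ ystar)
    (hopt : deriv g ystar * ystar = g ystar) :
    g ystar / ystar ≤ g yM / yM + (ystar - yM) ^ 2 * L / (2 * yM) :=
  stmt_1_general L g hg hlip yM ystar hyM hle hopt
end

section
/- Let L ≥ 0, ε > 0, and let g : ℝ → ℝ be differentiable with L-Lipschitz derivative. Suppose 0 < y_M ≤ y* ≤ y_M + √(ε·y_M) and g'(y*)·y* = g(y*). Then g(y*)/y* ≤ g(y_M)/y_M + ε·L. -/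
/-!
By the mean value theorem and the Lipschitz bound on `g'`, the tangent line at `y*` underestimates
`g` at `y_M` by at most `L (y* - y_M)²`. At a stationary point of `y ↦ g y / y` that tangent line
passes through the origin with slope `g(y*)/y*`, so the two ratios differ by at most
`L (y* - y_M)² / y_M ≤ ε L`.
-/

lemma sub_le_deriv_mul_sub_add_of_lipschitz_deriv {g : ℝ → ℝ} {L a b : ℝ} (hL : 0 ≤ L)
    (hg : Differentiable ℝ g) (hlip : ∀ y y' : ℝ, |deriv g y - deriv g y'| ≤ L * |y - y'|)
    (hab : a ≤ b) :
    g b - g a ≤ deriv g b * (b - a) + L * (b - a) ^ 2 := by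
  rcases hab.eq_or_lt with rfl | hab
  · simp
  obtain ⟨c, ⟨hac, hcb⟩, hslope⟩ := exists_hasDerivAt_eq_slope g (deriv g) hab
    hg.continuous.continuousOn fun x _ => (hg x).hasDerivAt
  have hmvt : g b - g a = deriv g c * (b - a) := by
    rw [hslope, div_mul_cancel₀ _ (sub_ne_zero.mpr hab.ne')]
  have hderiv : deriv g c ≤ deriv g b + L * (b - a) := by
    have hc : |c - b| ≤ b - a := by rw [abs_le]; constructor <;> linarith
    linarith [le_abs_self (deriv g c - deriv g b), hlip c b, mul_le_mul_of_nonneg_left hc hL]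
  rw [hmvt]
  nlinarith [mul_le_mul_of_nonneg_right hderiv (sub_nonneg.mpr hab.le)]

lemma div_le_div_add_of_deriv_mul_eq {g : ℝ → ℝ} {L y₀ y : ℝ} (hL : 0 ≤ L)
    (hg : Differentiable ℝ g) (hlip : ∀ y y' : ℝ, |deriv g y - deriv g y'| ≤ L * |y - y'|)
    (hy₀ : 0 < y₀) (hle : y₀ ≤ y) (hstat : deriv g y * y = g y) :
    g y / y ≤ g y₀ / y₀ + L * (y - y₀) ^ 2 / y₀ := by
  have hy : 0 < y := hy₀.trans_le hle
  have htangent := sub_le_deriv_mul_sub_add_of_lipschitz_deriv hL hg hlip hle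
  rw [← eq_div_iff hy.ne'] at hstat
  rw [hstat] at htangent
  rw [← add_div, div_le_div_iff₀ hy hy₀]
  have hcancel : g y / y * (y - y₀) * y = g y * (y - y₀) := by field_simp
  nlinarith

/-- ratio bound at a stationary point when y* is close to the grid point y_M. -/
theorem stmt_2 (L ε : ℝ) (hL : 0 ≤ L) (hε : 0 < ε) (g : ℝ → ℝ)
    (hg : Differentiable ℝ g)
    (hlip : ∀ y y' : ℝ, |deriv g y - deriv g y'| ≤ L * |y - y'|)
    (yM ystar : ℝ) (hyM : 0 < yM) (hle : yM ≤ ystar)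
    (hclose : ystar ≤ yM + Real.sqrt (ε * yM))
    (hopt : deriv g ystar * ystar = g ystar) :
    g ystar / ystar ≤ g yM / yM + ε * L := by
  have hsq : (ystar - yM) ^ 2 ≤ ε * yM := by
    rw [← Real.sq_sqrt (by positivity : 0 ≤ ε * yM)]
    exact pow_le_pow_left₀ (sub_nonneg.mpr hle) (by linarith) 2
  have herror : L * (ystar - yM) ^ 2 / yM ≤ ε * L := by
    rw [div_le_iff₀ hyM]
    nlinarith [mul_le_mul_of_nonneg_left hsq hL]
  linarith [div_le_div_add_of_deriv_mul_eq hL hg hlip hyM hle hopt]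
end

section
/- Let D > 0, W ≥ 0, c ≥ 0, and ℓ ∈ ℕ. Let V_0, V_1, …, V_ℓ and d_1, …, d_ℓ be real numbers with V_0 ≥ 0, 0 ≤ d_h ≤ D for every 1 ≤ h ≤ ℓ, and V_h ≥ (1 − d_h/D)·V_{h−1} + (d_h/D)·W − c·d_h for every 1 ≤ h ≤ ℓ. Then V_ℓ ≥ (1 − exp(−(Σ_{h=1}^ℓ d_h)/D))·W − c·(Σ_{h=1}^ℓ d_h). -/
open Finset Real

/-!
The gap `W - V h` to the benchmark contracts by the factor `1 - d h / D` at each step, up to the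
additive error `c * d h`. Unrolling, the gap after `ℓ` steps is at most `(∏ (1 - d h / D)) * W` plus
the accumulated errors, and `1 - x ≤ exp (-x)` bounds the product by `exp (-(∑ d h) / D)`.
-/

lemma Real.prod_one_sub_le_exp_neg_sum {ι : Type*} (s : Finset ι) (a : ι → ℝ)
    (ha : ∀ i ∈ s, a i ≤ 1) :
    ∏ i ∈ s, (1 - a i) ≤ exp (-∑ i ∈ s, a i) := by
  rw [← sum_neg_distrib, exp_sum]
  exact prod_le_prod (fun i hi => sub_nonneg.2 (ha i hi)) fun i _ => one_sub_le_exp_neg _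

lemma le_prod_one_sub_mul_add_sum_of_le_one_sub_mul_add (G a e : ℕ → ℝ) (ℓ : ℕ)
    (ha : ∀ h, 1 ≤ h → h ≤ ℓ → 0 ≤ a h ∧ a h ≤ 1) (he : ∀ h, 1 ≤ h → h ≤ ℓ → 0 ≤ e h)
    (hG : ∀ h, 1 ≤ h → h ≤ ℓ → G h ≤ (1 - a h) * G (h - 1) + e h) :
    G ℓ ≤ (∏ h ∈ Icc 1 ℓ, (1 - a h)) * G 0 + ∑ h ∈ Icc 1 ℓ, e h := by
  induction ℓ with
  | zero => simp
  | succ n ih =>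
    have ih := ih (fun h h1 h2 => ha h h1 (by omega)) (fun h h1 h2 => he h h1 (by omega))
      (fun h h1 h2 => hG h h1 (by omega))
    obtain ⟨ha0, ha1⟩ := ha (n + 1) (by omega) le_rfl
    have hstep := hG (n + 1) (by omega) le_rfl
    have hsum : 0 ≤ ∑ h ∈ Icc 1 n, e h :=
      sum_nonneg fun h hh => he h (mem_Icc.1 hh).1 ((mem_Icc.1 hh).2.trans n.le_succ)
    rw [Nat.add_sub_cancel] at hstep
    rw [prod_Icc_succ_top (by omega), sum_Icc_succ_top (by omega)]
    calc G (n + 1)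
        ≤ (1 - a (n + 1)) * G n + e (n + 1) := hstep
      _ ≤ (1 - a (n + 1)) * ((∏ h ∈ Icc 1 n, (1 - a h)) * G 0 + ∑ h ∈ Icc 1 n, e h)
            + e (n + 1) := by gcongr
      _ ≤ _ := by linarith [mul_nonneg ha0 hsum]

/-- the abstract induction behind the coordinate ascent guarantee. -/
theorem stmt_3 (D W c : ℝ) (hD : 0 < D) (hW : 0 ≤ W) (hc : 0 ≤ c) (ℓ : ℕ)
    (V d : ℕ → ℝ) (hV0 : 0 ≤ V 0)
    (hd : ∀ h : ℕ, 1 ≤ h → h ≤ ℓ → 0 ≤ d h ∧ d h ≤ D)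
    (hrec : ∀ h : ℕ, 1 ≤ h → h ≤ ℓ →
      V h ≥ (1 - d h / D) * V (h - 1) + (d h / D) * W - c * d h) :
    V ℓ ≥ (1 - Real.exp (-(∑ h ∈ Finset.Icc 1 ℓ, d h) / D)) * W
      - c * ∑ h ∈ Finset.Icc 1 ℓ, d h := by
  have hratio (h) (h1 : 1 ≤ h) (h2 : h ≤ ℓ) : 0 ≤ d h / D ∧ d h / D ≤ 1 :=
    ⟨div_nonneg (hd h h1 h2).1 hD.le, (div_le_one hD).2 (hd h h1 h2).2⟩
  have hgap := le_prod_one_sub_mul_add_sum_of_le_one_sub_mul_add (fun h => W - V h)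
    (fun h => d h / D) (fun h => c * d h) ℓ hratio
    (fun h h1 h2 => mul_nonneg hc (hd h h1 h2).1)
    (fun h h1 h2 => by linear_combination hrec h h1 h2)
  have hprod := prod_one_sub_le_exp_neg_sum (Icc 1 ℓ) (fun h => d h / D)
    fun h hh => (hratio h (mem_Icc.1 hh).1 (mem_Icc.1 hh).2).2
  have hprod0 : 0 ≤ ∏ h ∈ Icc 1 ℓ, (1 - d h / D) :=
    prod_nonneg fun h hh => sub_nonneg.2 (hratio h (mem_Icc.1 hh).1 (mem_Icc.1 hh).2).2
  rw [← sum_div, ← neg_div] at hprod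
  rw [← mul_sum] at hgap
  linarith [mul_le_mul_of_nonneg_right hprod hW, mul_nonneg hprod0 hV0]
end

section
/- Fix n ∈ ℕ and u ∈ ℝⁿ with u ≥ 0, and let F : [0,u] → ℝ be submodular. Let x ∈ [0,u] and o ∈ ℝⁿ with o ≥ 0 componentwise and x + o ∈ [0,u]. Then F(x + o) − F(x) ≤ Σ_{i=1}^n (F(x + o_i·e_i) − F(x)). -/
/-!
Disjoint nonnegative increments `a`, `b` (i.e. `a ⊓ b = 0`) satisfy
`(x + a) ⊔ (x + b) = x + (a + b)` and `(x + a) ⊓ (x + b) = x`, so submodularity at the pair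
`x + a`, `x + b` says that the marginal gain of `a + b` is at most the sum of the marginal gains
of `a` and `b`. The coordinate increments `oᵢ eᵢ` are pairwise disjoint, and induction on the set of
coordinates gives the claim.
-/

open Finset

def SubmodularOn {α β : Type*} [Lattice α] [Add β] [LE β] (S : Set α) (F : α → β) : Prop :=
  ∀ ⦃x⦄, x ∈ S → ∀ ⦃y⦄, y ∈ S → F (x ⊔ y) + F (x ⊓ y) ≤ F x + F y

section LatticeGroup

variable {α : Type*} [Lattice α] [AddCommGroup α] [AddLeftMono α]

theorem add_sup_add_of_inf_eq_zero {a b : α} (hab : a ⊓ b = 0) (x : α) :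
    (x + a) ⊔ (x + b) = x + (a + b) := by
  rw [← add_sup, ← inf_add_sup a b, hab, zero_add]

theorem add_inf_add_of_inf_eq_zero {a b : α} (hab : a ⊓ b = 0) (x : α) :
    (x + a) ⊓ (x + b) = x := by
  rw [← add_inf, hab, add_zero]

theorem add_inf_eq_zero {a b c : α} (ha : 0 ≤ a) (hb : 0 ≤ b) (hc : 0 ≤ c)
    (hac : a ⊓ c = 0) (hbc : b ⊓ c = 0) : (a + b) ⊓ c = 0 := by
  refine le_antisymm ?_ (le_inf (add_nonneg ha hb) hc)
  have hle_b : (a + b) ⊓ c ≤ b :=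
    calc (a + b) ⊓ c ≤ (a + b) ⊓ (c + b) := inf_le_inf_left _ (le_add_of_nonneg_right hb)
      _ = a ⊓ c + b := (inf_add a c b).symm
      _ = b := by rw [hac, zero_add]
  exact hbc ▸ le_inf hle_b inf_le_right

theorem sum_inf_eq_zero {ι : Type*} {v : ι → α} {s : Finset ι} {c : α}
    (hv : ∀ i ∈ s, 0 ≤ v i) (hc : 0 ≤ c) (hvc : ∀ i ∈ s, v i ⊓ c = 0) :
    (∑ i ∈ s, v i) ⊓ c = 0 := by
  classical
  induction s using Finset.induction_on with
  | empty => simpa using inf_of_le_left hc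
  | insert j s hj ih =>
    have hv' : ∀ i ∈ s, 0 ≤ v i := fun i hi ↦ hv i (mem_insert_of_mem hi)
    rw [sum_insert hj]
    exact add_inf_eq_zero (hv j (mem_insert_self j s)) (sum_nonneg hv') hc
      (hvc j (mem_insert_self j s)) (ih hv' fun i hi ↦ hvc i (mem_insert_of_mem hi))

variable {β : Type*} [AddCommGroup β] [PartialOrder β] [IsOrderedAddMonoid β]
  {S : Set α} {F : α → β}

theorem SubmodularOn.sub_le_add_of_inf_eq_zero (hF : SubmodularOn S F) {x a b : α}
    (ha : x + a ∈ S) (hb : x + b ∈ S) (hab : a ⊓ b = 0) :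
    F (x + (a + b)) - F x ≤ (F (x + a) - F x) + (F (x + b) - F x) := by
  have h := hF ha hb
  rw [add_sup_add_of_inf_eq_zero hab, add_inf_add_of_inf_eq_zero hab] at h
  calc F (x + (a + b)) - F x = F (x + (a + b)) + F x - (F x + F x) := by abel
    _ ≤ F (x + a) + F (x + b) - (F x + F x) := sub_le_sub_right h _
    _ = (F (x + a) - F x) + (F (x + b) - F x) := by abel

theorem SubmodularOn.sub_le_sum_sub (hF : SubmodularOn S F) (hS : S.OrdConnected)
    {ι : Type*} {v : ι → α} {s : Finset ι} (hv : ∀ i ∈ s, 0 ≤ v i)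
    (hdisj : (s : Set ι).Pairwise fun i j ↦ v i ⊓ v j = 0) {x : α} (hx : x ∈ S)
    (hxv : x + ∑ i ∈ s, v i ∈ S) :
    F (x + ∑ i ∈ s, v i) - F x ≤ ∑ i ∈ s, (F (x + v i) - F x) := by
  classical
  induction s using Finset.induction_on with
  | empty => simp
  | insert j s hj ih =>
    rw [coe_insert, Set.pairwise_insert] at hdisj
    have hv' : ∀ i ∈ s, 0 ≤ v i := fun i hi ↦ hv i (mem_insert_of_mem hi)
    have hvj : 0 ≤ v j := hv j (mem_insert_self j s)
    have hsum : 0 ≤ ∑ i ∈ s, v i := sum_nonneg hv'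
    rw [sum_insert hj] at hxv ⊢
    have hxs : x + ∑ i ∈ s, v i ∈ S :=
      hS.out hx hxv ⟨le_add_of_nonneg_right hsum, by gcongr; exact le_add_of_nonneg_left hvj⟩
    have hxj : x + v j ∈ S :=
      hS.out hx hxv ⟨le_add_of_nonneg_right hvj, by gcongr; exact le_add_of_nonneg_right hsum⟩
    have hdisj_j : (∑ i ∈ s, v i) ⊓ v j = 0 :=
      sum_inf_eq_zero hv' hvj fun i hi ↦ (hdisj.2 i hi (ne_of_mem_of_not_mem hi hj).symm).2
    calc F (x + (v j + ∑ i ∈ s, v i)) - F x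
        ≤ (F (x + v j) - F x) + (F (x + ∑ i ∈ s, v i) - F x) :=
          hF.sub_le_add_of_inf_eq_zero hxj hxs (inf_comm (v j) _ ▸ hdisj_j)
      _ ≤ (F (x + v j) - F x) + ∑ i ∈ s, (F (x + v i) - F x) := by
          gcongr
          exact ih hv' hdisj.1 hxs
      _ = ∑ i ∈ insert j s, (F (x + v i) - F x) := by rw [sum_insert hj]

end LatticeGroup

theorem Pi.single_inf_single_of_ne {ι β : Type*} [DecidableEq ι] [Lattice β] [Zero β]
    {i j : ι} (hij : i ≠ j) {a b : β} (ha : 0 ≤ a) (hb : 0 ≤ b) :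
    (Pi.single i a : ι → β) ⊓ Pi.single j b = 0 := by
  ext k
  rw [Pi.inf_apply, Pi.single_apply, Pi.single_apply, Pi.zero_apply]
  split_ifs with hki hkj
  · exact absurd (hki.symm.trans hkj) hij
  · exact inf_of_le_right ha
  · exact inf_of_le_left hb
  · exact inf_idem 0

theorem stmt_4_general (n : ℕ) (u : Fin n → ℝ) (F : (Fin n → ℝ) → ℝ)
    (hsub : ∀ x y : Fin n → ℝ, 0 ≤ x → x ≤ u → 0 ≤ y → y ≤ u →
      F (x ⊔ y) + F (x ⊓ y) ≤ F x + F y)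
    (x o : Fin n → ℝ) (hx0 : 0 ≤ x) (hxu : x ≤ u) (ho : 0 ≤ o)
    (hxo : x + o ≤ u) :
    F (x + o) - F x ≤ ∑ i : Fin n, (F (x + Pi.single i (o i)) - F x) := by
  have hF : SubmodularOn (Set.Icc 0 u) F := fun x hx y hy ↦ hsub x y hx.1 hx.2 hy.1 hy.2
  have hsingle : ∀ i ∈ (univ : Finset (Fin n)), 0 ≤ (Pi.single i (o i) : Fin n → ℝ) :=
    fun i _ ↦ Pi.single_nonneg.2 (ho i)
  have hdisj : ((univ : Finset (Fin n)) : Set (Fin n)).Pairwise fun i j ↦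
      (Pi.single i (o i) : Fin n → ℝ) ⊓ Pi.single j (o j) = 0 :=
    fun i _ j _ hij ↦ Pi.single_inf_single_of_ne hij (ho i) (ho j)
  have hxo_mem : x + ∑ i, Pi.single i (o i) ∈ Set.Icc 0 u := by
    rw [univ_sum_single]
    exact ⟨add_nonneg hx0 ho, hxo⟩
  simpa only [univ_sum_single] using
    hF.sub_le_sum_sub Set.ordConnected_Icc hsingle hdisj ⟨hx0, hxu⟩ hxo_mem

/-- subadditivity of marginals for a submodular function on a box. -/
theorem stmt_4 (n : ℕ) (u : Fin n → ℝ) (hu : 0 ≤ u) (F : (Fin n → ℝ) → ℝ)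
    (hsub : ∀ x y : Fin n → ℝ, 0 ≤ x → x ≤ u → 0 ≤ y → y ≤ u →
      F (x ⊔ y) + F (x ⊓ y) ≤ F x + F y)
    (x o : Fin n → ℝ) (hx0 : 0 ≤ x) (hxu : x ≤ u) (ho : 0 ≤ o)
    (hxo : x + o ≤ u) :
    F (x + o) - F x ≤ ∑ i : Fin n, (F (x + Pi.single i (o i)) - F x) :=
  stmt_4_general n u F hsub x o hx0 hxu ho hxo
end

section
/- Fix n ∈ ℕ and u ∈ ℝⁿ with u ≥ 0, and let F : [0,u] → ℝ be non-negative, monotone and submodular. Let ε ∈ (0, 1/4), B ≥ 0, L ≥ 0, let OPT ∈ [0,u], let j be a coordinate, and let g ∈ [0,u] satisfy F(g) ≥ (1 − 1/e − 2ε)·F(OPT − OPT_j·e_j) − ε·B·L. Then max(F(g), F(u_j·e_j)) ≥ ((e − 1)/(2e − 1) − 2ε)·F(OPT) − ε·B·L. -/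
/-!
Split `OPT` into `OPT - OPT_j e_j` and `u_j e_j`: the two pieces meet in `0` and their join
dominates `OPT`, so submodularity, monotonicity and non-negativity give
`F(OPT) ≤ F(OPT - OPT_j e_j) + F(u_j e_j)`. With `p = 1 - 1/e - 2ε`, the better of `g` and
`u_j e_j` is then worth at least `p/(1+p)` of this sum, minus `εBL`; and `p/(1+p)` loses at most
`2ε` against `(1 - 1/e)/(2 - 1/e) = (e - 1)/(2e - 1)`, because `s ↦ s/(1+s)` is 1-Lipschitz on
`[0, ∞)`.
-/

section CoordinateSplit

variable {ι : Type*} [DecidableEq ι] {u v : ι → ℝ} {j : ι}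

lemma sub_single_self_nonneg (hv : 0 ≤ v) : 0 ≤ v - Pi.single j (v j) := fun i => by
  by_cases h : i = j
  · subst h; simp
  · simpa [h] using hv i

lemma single_self_le (hu : 0 ≤ u) : Pi.single j (u j) ≤ u := fun i => by
  by_cases h : i = j
  · subst h; simp
  · simpa [h] using hu i

lemma sub_single_self_inf_single {c : ℝ} (hv : 0 ≤ v) (hc : 0 ≤ c) :
    (v - Pi.single j (v j)) ⊓ (Pi.single j c : ι → ℝ) = 0 := funext fun i => by
  by_cases h : i = j
  · subst h; simpa using hc
  · simpa [h] using hv i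

lemma le_sub_single_self_sup_single {c : ℝ} (hc : v j ≤ c) :
    v ≤ (v - Pi.single j (v j)) ⊔ (Pi.single j c : ι → ℝ) := fun i => by
  by_cases h : i = j
  · subst h; simpa using Or.inr hc
  · simp [h]

lemma apply_le_apply_sub_single_add_apply_single (hu : 0 ≤ u) (F : (ι → ℝ) → ℝ)
    (hnn : ∀ x : ι → ℝ, 0 ≤ x → x ≤ u → 0 ≤ F x)
    (hmono : ∀ x y : ι → ℝ, 0 ≤ x → x ≤ u → 0 ≤ y → y ≤ u → x ≤ y → F x ≤ F y)
    (hsub : ∀ x y : ι → ℝ, 0 ≤ x → x ≤ u → 0 ≤ y → y ≤ u →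
      F (x ⊔ y) + F (x ⊓ y) ≤ F x + F y)
    (hv0 : 0 ≤ v) (hvu : v ≤ u) :
    F v ≤ F (v - Pi.single j (v j)) + F (Pi.single j (u j)) := by
  set x := v - Pi.single j (v j)
  set y : ι → ℝ := Pi.single j (u j)
  have hx0 : 0 ≤ x := sub_single_self_nonneg hv0
  have hxu : x ≤ u := (sub_le_self _ (Pi.single_nonneg.2 (hv0 j))).trans hvu
  have hy0 : 0 ≤ y := Pi.single_nonneg.2 (hu j)
  have hyu : y ≤ u := single_self_le hu
  have hinf : x ⊓ y = 0 := sub_single_self_inf_single hv0 (hu j)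
  have hv_le : F v ≤ F (x ⊔ y) :=
    hmono v _ hv0 hvu (le_sup_of_le_left hx0) (sup_le hxu hyu)
      (le_sub_single_self_sup_single (hvu j))
  have hF0 : 0 ≤ F (x ⊓ y) := hinf ▸ hnn 0 le_rfl hu
  linarith [hsub x y hx0 hxu hy0 hyu]

end CoordinateSplit

section Arithmetic

variable {p t : ℝ}

/-- Compare the `max` with the combination of its arguments with weights `1/(1+p)`, `p/(1+p)`. -/
lemma div_one_add_mul_add_sub_le_max (hp : 0 ≤ p) (ht : 0 ≤ t) (a c : ℝ) :
    p / (1 + p) * (a + c) - t ≤ max (p * a - t) c := by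
  have h1p : 0 < 1 + p := by linarith
  have hweighted : p / (1 + p) * (a + c) - t / (1 + p) ≤ max (p * a - t) c := by
    calc p / (1 + p) * (a + c) - t / (1 + p)
        = 1 / (1 + p) * (p * a - t) + p / (1 + p) * c := by field_simp; ring
      _ ≤ 1 / (1 + p) * max (p * a - t) c + p / (1 + p) * max (p * a - t) c := by
          gcongr
          exacts [le_max_left _ _, le_max_right _ _]
      _ = max (p * a - t) c := by field_simp
  have : t / (1 + p) ≤ t := div_le_self ht (by linarith)
  linarith

lemma add_div_one_add_add_le {δ : ℝ} (hp : 0 ≤ p) (hδ : 0 ≤ δ) :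
    (p + δ) / (1 + (p + δ)) ≤ p / (1 + p) + δ := by
  rw [div_le_iff₀ (by positivity), div_add' _ _ _ (by positivity), div_mul_eq_mul_div,
    le_div_iff₀ (by positivity)]
  nlinarith [mul_nonneg hδ (mul_nonneg hp (add_nonneg hp hδ)), mul_nonneg hδ hp,
    mul_nonneg hδ hδ, mul_nonneg (mul_nonneg hδ hδ) hp]

end Arithmetic

theorem stmt_8_general (n : ℕ) (u : Fin n → ℝ) (hu : 0 ≤ u) (F : (Fin n → ℝ) → ℝ)
    (hnn : ∀ x : Fin n → ℝ, 0 ≤ x → x ≤ u → 0 ≤ F x)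
    (hmono : ∀ x y : Fin n → ℝ, 0 ≤ x → x ≤ u → 0 ≤ y → y ≤ u → x ≤ y → F x ≤ F y)
    (hsub : ∀ x y : Fin n → ℝ, 0 ≤ x → x ≤ u → 0 ≤ y → y ≤ u →
      F (x ⊔ y) + F (x ⊓ y) ≤ F x + F y)
    (ε B L : ℝ) (hε : ε ∈ Set.Ioo (0 : ℝ) (1 / 4)) (hB : 0 ≤ B) (hL : 0 ≤ L)
    (OPT : Fin n → ℝ) (hOPT0 : 0 ≤ OPT) (hOPTu : OPT ≤ u) (j : Fin n)
    (g : Fin n → ℝ)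
    (hgval : F g ≥ (1 - 1 / Real.exp 1 - 2 * ε) * F (OPT - Pi.single j (OPT j)) - ε * B * L) :
    max (F g) (F (Pi.single j (u j))) ≥
      ((Real.exp 1 - 1) / (2 * Real.exp 1 - 1) - 2 * ε) * F OPT - ε * B * L := by
  obtain ⟨hε0, hε4⟩ := hε
  set p := 1 - 1 / Real.exp 1 - 2 * ε
  have he : 2 < Real.exp 1 := Real.exp_one_gt_two
  have hp : 0 ≤ p := by
    have : 1 / Real.exp 1 < 1 / 2 := one_div_lt_one_div_of_lt two_pos he
    linarith
  have hcoef : (Real.exp 1 - 1) / (2 * Real.exp 1 - 1) - 2 * ε ≤ p / (1 + p) := by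
    have hconst : (Real.exp 1 - 1) / (2 * Real.exp 1 - 1) = (p + 2 * ε) / (1 + (p + 2 * ε)) := by
      simp only [p]
      field_simp
      ring
    linarith [add_div_one_add_add_le hp (by linarith : 0 ≤ 2 * ε)]
  have hsplit :=
    apply_le_apply_sub_single_add_apply_single (j := j) hu F hnn hmono hsub hOPT0 hOPTu
  have hOPT : 0 ≤ F OPT := hnn OPT hOPT0 hOPTu
  calc ((Real.exp 1 - 1) / (2 * Real.exp 1 - 1) - 2 * ε) * F OPT - ε * B * L
      ≤ p / (1 + p) * (F (OPT - Pi.single j (OPT j)) + F (Pi.single j (u j))) - ε * B * L := by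
        gcongr
    _ ≤ max (p * F (OPT - Pi.single j (OPT j)) - ε * B * L) (F (Pi.single j (u j))) :=
        div_one_add_mul_add_sub_le_max hp (by positivity) _ _
    _ ≤ max (F g) (F (Pi.single j (u j))) := max_le_max_right _ hgval

/-- the combination step of the Enhanced Coordinate Ascent analysis. -/
theorem stmt_8 (n : ℕ) (u : Fin n → ℝ) (hu : 0 ≤ u) (F : (Fin n → ℝ) → ℝ)
    (hnn : ∀ x : Fin n → ℝ, 0 ≤ x → x ≤ u → 0 ≤ F x)
    (hmono : ∀ x y : Fin n → ℝ, 0 ≤ x → x ≤ u → 0 ≤ y → y ≤ u → x ≤ y → F x ≤ F y)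
    (hsub : ∀ x y : Fin n → ℝ, 0 ≤ x → x ≤ u → 0 ≤ y → y ≤ u →
      F (x ⊔ y) + F (x ⊓ y) ≤ F x + F y)
    (ε B L : ℝ) (hε : ε ∈ Set.Ioo (0 : ℝ) (1 / 4)) (hB : 0 ≤ B) (hL : 0 ≤ L)
    (OPT : Fin n → ℝ) (hOPT0 : 0 ≤ OPT) (hOPTu : OPT ≤ u) (j : Fin n)
    (g : Fin n → ℝ) (hg0 : 0 ≤ g) (hgu : g ≤ u)
    (hgval : F g ≥ (1 - 1 / Real.exp 1 - 2 * ε) * F (OPT - Pi.single j (OPT j)) - ε * B * L) :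
    max (F g) (F (Pi.single j (u j))) ≥
      ((Real.exp 1 - 1) / (2 * Real.exp 1 - 1) - 2 * ε) * F OPT - ε * B * L :=
  stmt_8_general n u hu F hnn hmono hsub ε B L hε hB hL OPT hOPT0 hOPTu j g hgval
end

section
/- Fix n ∈ ℕ with n ≥ 3 and u ∈ ℝⁿ with u ≥ 0, and let F : [0,u] → ℝ be non-negative and submodular. Let v ∈ [0,u], let h₁ be a coordinate maximizing F(v_{h₁}·e_{h₁}) over all coordinates, and let h₂ ≠ h₁ be a coordinate maximizing F(v_{h₁}·e_{h₁} + v_{h₂}·e_{h₂}) over all coordinates other than h₁. Then for every coordinate i ∉ {h₁, h₂}: F(v_{h₁}·e_{h₁} + v_{h₂}·e_{h₂} + v_i·e_i) − F(v_{h₁}·e_{h₁} + v_{h₂}·e_{h₂}) ≤ F(v_{h₁}·e_{h₁} + v_{h₂}·e_{h₂})/2. -/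
/-!
Write `a`, `b`, `c` for `v h₁ • e h₁`, `v h₂ • e h₂`, `v i • e i`. These have disjoint supports, so
sums of them are joins and their pairwise meets vanish. Submodularity applied to the pairs
`(a + c, a + b)` and `(a + b, c)` gives
`F (a + b + c) + F a ≤ F (a + c) + F (a + b)` and `F (a + b + c) + F 0 ≤ F (a + b) + F c`.
Adding them and using the greedy choices `F (a + c) ≤ F (a + b)`, `F c ≤ F a` together with
`F 0 ≥ 0` yields `2 (F (a + b + c) - F (a + b)) ≤ F (a + b)`.
-/

namespace Pi

variable {ι α : Type*} [DecidableEq ι]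

lemma single_inf_single_of_ne_s9 [Lattice α] [Zero α] {i j : ι} (hij : i ≠ j) {x y : α}
    (hx : 0 ≤ x) (hy : 0 ≤ y) : (single i x ⊓ single j y : ι → α) = 0 := by
  ext k
  rcases eq_or_ne k i with rfl | hki
  · simp [hij, hx]
  · rcases eq_or_ne k j with rfl | hkj
    · simp [hki, hy]
    · simp [hki, hkj]

lemma single_apply_le_self [Preorder α] [Zero α] {v : ι → α} (hv : 0 ≤ v) (i : ι) :
    single i (v i) ≤ v := by
  intro k
  rcases eq_or_ne k i with rfl | hki
  · simp
  · simpa [hki] using hv k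

end Pi

section LatticeOrderedAddCommGroup

variable {α : Type*} [Lattice α] [AddCommGroup α] [IsOrderedAddMonoid α]

lemma add_eq_sup_of_inf_eq_zero {a b : α} (h : a ⊓ b = 0) : a + b = a ⊔ b := by
  rw [← inf_add_sup a b, h, zero_add]

lemma add_inf_eq_zero_of_inf_eq_zero {a b c : α} (hab : a ⊓ b = 0) (hac : a ⊓ c = 0)
    (hbc : b ⊓ c = 0) : (a + b) ⊓ c = 0 := by
  let := AddCommGroup.toDistribLattice α
  rw [add_eq_sup_of_inf_eq_zero hab, inf_sup_right, hac, hbc, sup_idem]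

theorem marginal_le_half_of_submodular {u : α} {F : α → ℝ}
    (hsub : ∀ x y : α, 0 ≤ x → x ≤ u → 0 ≤ y → y ≤ u → F (x ⊔ y) + F (x ⊓ y) ≤ F x + F y)
    (hF0 : 0 ≤ F 0) {a b c : α} (ha : 0 ≤ a) (hb : 0 ≤ b) (hc : 0 ≤ c)
    (hab : a ⊓ b = 0) (hac : a ⊓ c = 0) (hbc : b ⊓ c = 0) (habc : a + b + c ≤ u)
    (hca : F c ≤ F a) (hacb : F (a + c) ≤ F (a + b)) :
    F (a + b + c) - F (a + b) ≤ F (a + b) / 2 := by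
  have hab_u : a + b ≤ u := (le_add_of_nonneg_right hc).trans habc
  have hac_u : a + c ≤ u := by
    refine le_trans ?_ habc
    rw [add_right_comm]
    exact le_add_of_nonneg_right hb
  have hc_u : c ≤ u := (le_add_of_nonneg_left (add_nonneg ha hb)).trans habc
  have hcb : c ⊓ b = 0 := by rw [inf_comm, hbc]
  have habc_inf : (a + b) ⊓ c = 0 := add_inf_eq_zero_of_inf_eq_zero hab hac hbc
  have h₁ : F (a + b + c) + F a ≤ F (a + c) + F (a + b) := by
    have := hsub (a + c) (a + b) (add_nonneg ha hc) hac_u (add_nonneg ha hb) hab_u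
    rwa [← add_sup, ← add_inf, ← add_eq_sup_of_inf_eq_zero hcb, hcb, add_zero,
      add_comm c b, ← add_assoc] at this
  have h₂ : F (a + b + c) + F 0 ≤ F (a + b) + F c := by
    have := hsub (a + b) c (add_nonneg ha hb) hab_u hc hc_u
    rwa [← add_eq_sup_of_inf_eq_zero habc_inf, habc_inf] at this
  linarith

end LatticeOrderedAddCommGroup

theorem stmt_9_general (n : ℕ) (u : Fin n → ℝ) (hu : 0 ≤ u)
    (F : (Fin n → ℝ) → ℝ)
    (hnn : ∀ x : Fin n → ℝ, 0 ≤ x → x ≤ u → 0 ≤ F x)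
    (hsub : ∀ x y : Fin n → ℝ, 0 ≤ x → x ≤ u → 0 ≤ y → y ≤ u →
      F (x ⊔ y) + F (x ⊓ y) ≤ F x + F y)
    (v : Fin n → ℝ) (hv0 : 0 ≤ v) (hvu : v ≤ u)
    (h₁ h₂ : Fin n) (hne : h₂ ≠ h₁)
    (hmax1 : ∀ k : Fin n, F (Pi.single k (v k)) ≤ F (Pi.single h₁ (v h₁)))
    (hmax2 : ∀ k : Fin n, k ≠ h₁ →
      F (Pi.single h₁ (v h₁) + Pi.single k (v k)) ≤
        F (Pi.single h₁ (v h₁) + Pi.single h₂ (v h₂)))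
    (i : Fin n) (hi1 : i ≠ h₁) (hi2 : i ≠ h₂) :
    F (Pi.single h₁ (v h₁) + Pi.single h₂ (v h₂) + Pi.single i (v i)) -
        F (Pi.single h₁ (v h₁) + Pi.single h₂ (v h₂)) ≤
      F (Pi.single h₁ (v h₁) + Pi.single h₂ (v h₂)) / 2 := by
  have hv (k : Fin n) : 0 ≤ v k := hv0 k
  have hnonneg (k : Fin n) : (0 : Fin n → ℝ) ≤ Pi.single k (v k) := Pi.single_nonneg.2 (hv k)
  have hdisj {k l : Fin n} (hkl : k ≠ l) : Pi.single k (v k) ⊓ Pi.single l (v l) = 0 :=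
    Pi.single_inf_single_of_ne_s9 hkl (hv k) (hv l)
  have hle (k : Fin n) : Pi.single k (v k) ≤ v := Pi.single_apply_le_self hv0 k
  have h₁₂ := hdisj hne.symm
  have h₁i := hdisj hi1.symm
  have h₂i := hdisj hi2.symm
  refine marginal_le_half_of_submodular hsub (hnn 0 le_rfl hu) (hnonneg h₁) (hnonneg h₂)
    (hnonneg i) h₁₂ h₁i h₂i ?_ (hmax1 i) (hmax2 i hi1)
  rw [add_eq_sup_of_inf_eq_zero (add_inf_eq_zero_of_inf_eq_zero h₁₂ h₁i h₂i),
    add_eq_sup_of_inf_eq_zero h₁₂]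
  exact (sup_le (sup_le (hle h₁) (hle h₂)) (hle i)).trans hvu

/-- after the two best coordinates are chosen, no other coordinate
of v contributes more than half of their joint value. -/
theorem stmt_9 (n : ℕ) (hn : 3 ≤ n) (u : Fin n → ℝ) (hu : 0 ≤ u)
    (F : (Fin n → ℝ) → ℝ)
    (hnn : ∀ x : Fin n → ℝ, 0 ≤ x → x ≤ u → 0 ≤ F x)
    (hsub : ∀ x y : Fin n → ℝ, 0 ≤ x → x ≤ u → 0 ≤ y → y ≤ u →
      F (x ⊔ y) + F (x ⊓ y) ≤ F x + F y)
    (v : Fin n → ℝ) (hv0 : 0 ≤ v) (hvu : v ≤ u)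
    (h₁ h₂ : Fin n) (hne : h₂ ≠ h₁)
    (hmax1 : ∀ k : Fin n, F (Pi.single k (v k)) ≤ F (Pi.single h₁ (v h₁)))
    (hmax2 : ∀ k : Fin n, k ≠ h₁ →
      F (Pi.single h₁ (v h₁) + Pi.single k (v k)) ≤
        F (Pi.single h₁ (v h₁) + Pi.single h₂ (v h₂)))
    (i : Fin n) (hi1 : i ≠ h₁) (hi2 : i ≠ h₂) :
    F (Pi.single h₁ (v h₁) + Pi.single h₂ (v h₂) + Pi.single i (v i)) -
        F (Pi.single h₁ (v h₁) + Pi.single h₂ (v h₂)) ≤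
      F (Pi.single h₁ (v h₁) + Pi.single h₂ (v h₂)) / 2 :=
  stmt_9_general n u hu F hnn hsub v hv0 hvu h₁ h₂ hne hmax1 hmax2 i hi1 hi2
end

section
/- Let ε > 0 and let (w_i)_{i≥0} be a sequence of real numbers with w_0 ≥ ε and w_{i+1} = w_i + √(ε·w_i) for every i ≥ 0. Then for every non-negative integer i, w_i ≥ ε·(i² + 16)/16. -/
/-!
Since `x ↦ x + √(ε x)` is monotone, it suffices that the bound `ε q` with `q = (i² + 16)/16`
is carried forward by one step. By homogeneity `ε q + √(ε · ε q) = ε (q + √q)`, and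
`q + √q ≥ ((i + 1)² + 16)/16` because the increment `(2i + 1)/16` is at most `√q`.
-/

namespace GridSequence

theorem add_sqrt_mul_le_add_sqrt_mul {ε x y : ℝ} (hε : 0 ≤ ε) (hxy : x ≤ y) :
    x + √(ε * x) ≤ y + √(ε * y) :=
  add_le_add hxy (Real.sqrt_le_sqrt (mul_le_mul_of_nonneg_left hxy hε))

theorem sqrt_mul_mul_self_left {ε : ℝ} (hε : 0 ≤ ε) (q : ℝ) : √(ε * (ε * q)) = ε * √q := by
  rw [← mul_assoc, Real.sqrt_mul (mul_self_nonneg ε), Real.sqrt_mul_self hε]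

theorem succ_sq_add_sixteen_div_le (n : ℝ) :
    ((n + 1) ^ 2 + 16) / 16 ≤ (n ^ 2 + 16) / 16 + √((n ^ 2 + 16) / 16) := by
  have hincr : (2 * n + 1) / 16 ≤ √((n ^ 2 + 16) / 16) :=
    Real.le_sqrt_of_sq_le (by nlinarith)
  linarith

end GridSequence

open GridSequence in
/-- quadratic lower bound on the growth of the grid sequence
once it has reached ε. -/
theorem stmt_14 (ε : ℝ) (hε : 0 < ε) (w : ℕ → ℝ) (hw0 : ε ≤ w 0)
    (hws : ∀ i : ℕ, w (i + 1) = w i + Real.sqrt (ε * w i)) :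
    ∀ i : ℕ, ε * ((i : ℝ) ^ 2 + 16) / 16 ≤ w i := by
  intro i
  induction i with
  | zero => simpa using hw0
  | succ n ih =>
    set q : ℝ := ((n : ℝ) ^ 2 + 16) / 16
    have hstep : ε * q + √(ε * (ε * q)) ≤ w (n + 1) := by
      rw [hws n]
      exact add_sqrt_mul_le_add_sqrt_mul hε.le (by simpa only [q, mul_div_assoc] using ih)
    rw [sqrt_mul_mul_self_left hε.le] at hstep
    calc ε * (((n + 1 : ℕ) : ℝ) ^ 2 + 16) / 16
        = ε * ((((n : ℝ) + 1) ^ 2 + 16) / 16) := by push_cast; ring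
      _ ≤ ε * (q + √q) := by gcongr; exact succ_sq_add_sixteen_div_le n
      _ ≤ w (n + 1) := by linarith
end

section
/- Let ε > 0, a > 0, and B > 0. Define the sequence z_0 = a and z_{i+1} = z_i + √(ε·z_i). Then for i' = max(0, ⌈log₂(ε/a)⌉) + ⌈4·√(B/ε)⌉, one has z_{i'} ≥ B. -/
/-!
While `z i < ε` the step `√(ε z)` is at least `z`, so the sequence at least doubles; after
`⌈log₂ (ε / a)⌉` steps it has therefore reached `ε`. From then on
`(√z + √ε / 4)² ≤ z + √ε √z`, so `√z` grows by at least `√ε / 4` per step, and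
`⌈4 √(B / ε)⌉` further steps push `√z` past `√B`.
-/

open Real

lemma le_sqrt_mul_of_le {ε x : ℝ} (hx : 0 ≤ x) (h : x ≤ ε) : x ≤ √(ε * x) :=
  Real.le_sqrt_of_sq_le (by nlinarith)

lemma sqrt_add_div_four_le_sqrt_add_sqrt_mul {ε x : ℝ} (hε : 0 ≤ ε) (h : ε ≤ x) :
    √x + √ε / 4 ≤ √(x + √(ε * x)) := by
  have hx : 0 ≤ x := hε.trans h
  have hsqrt : √ε ≤ √x := Real.sqrt_le_sqrt h
  have hε0 : 0 ≤ √ε := Real.sqrt_nonneg ε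
  rw [Real.sqrt_mul hε, Real.le_sqrt (by positivity) (by positivity)]
  nlinarith [Real.sq_sqrt hε, Real.sq_sqrt hx]

lemma le_pow_toNat_ceil_logb {b : ℕ} (hb : 1 < b) {x : ℝ} (hx : 0 ≤ x) :
    x ≤ (b : ℝ) ^ ⌈logb b x⌉.toNat := by
  rw [ceil_logb_natCast hx, ← zpow_natCast]
  calc x ≤ (b : ℝ) ^ Int.clog b x := Int.self_le_zpow_clog hb x
    _ ≤ (b : ℝ) ^ ((Int.clog b x).toNat : ℤ) :=
      zpow_le_zpow_right₀ (by exact_mod_cast hb.le) (Int.self_le_toNat _)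

section Grid

variable {ε : ℝ} {z : ℕ → ℝ}

lemma grid_monotone (hzs : ∀ i, z (i + 1) = z i + √(ε * z i)) : Monotone z :=
  monotone_nat_of_le_succ fun i => by rw [hzs]; linarith [Real.sqrt_nonneg (ε * z i)]

lemma min_mul_two_pow_le_grid (hzs : ∀ i, z (i + 1) = z i + √(ε * z i)) (h0 : 0 ≤ z 0)
    (i : ℕ) : min (z 0 * 2 ^ i) ε ≤ z i := by
  induction i with
  | zero => simp
  | succ n ih =>
    rcases le_or_gt ε (z n) with hεz | hzε
    · exact (min_le_right _ _).trans (hεz.trans (grid_monotone hzs n.le_succ))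
    · have hzn : 0 ≤ z n := h0.trans (grid_monotone hzs n.zero_le)
      have hdouble : 2 * z n ≤ z (n + 1) := by
        rw [hzs]
        linarith [le_sqrt_mul_of_le hzn hzε.le]
      have hmin : min (z 0 * 2 ^ (n + 1)) ε ≤ 2 * min (z 0 * 2 ^ n) ε := by
        rw [mul_min_of_nonneg _ _ (zero_le_two : (0 : ℝ) ≤ 2)]
        exact min_le_min (le_of_eq (by ring)) (by linarith)
      linarith

lemma nat_mul_sqrt_div_four_le_sqrt_grid (hzs : ∀ i, z (i + 1) = z i + √(ε * z i))
    (hε : 0 ≤ ε) {k : ℕ} (hk : ε ≤ z k) (j : ℕ) : j * √ε / 4 ≤ √(z (k + j)) := by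
  induction j with
  | zero => simp
  | succ n ih =>
    have hεn : ε ≤ z (k + n) := hk.trans (grid_monotone hzs (Nat.le_add_right k n))
    calc ((n + 1 : ℕ) : ℝ) * √ε / 4 = n * √ε / 4 + √ε / 4 := by push_cast; ring
      _ ≤ √(z (k + n)) + √ε / 4 := by gcongr
      _ ≤ √(z (k + n) + √(ε * z (k + n))) := sqrt_add_div_four_le_sqrt_add_sqrt_mul hε hεn
      _ = √(z (k + (n + 1))) := by rw [← add_assoc, hzs]

end Grid

theorem stmt_15_general (ε a B : ℝ) (hε : 0 < ε) (ha : 0 < a)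
    (z : ℕ → ℝ) (hz0 : z 0 = a)
    (hzs : ∀ i : ℕ, z (i + 1) = z i + Real.sqrt (ε * z i)) :
    B ≤ z (⌈Real.logb 2 (ε / a)⌉.toNat + ⌈4 * Real.sqrt (B / ε)⌉₊) := by
  set k₁ := ⌈logb 2 (ε / a)⌉.toNat
  set k₂ := ⌈4 * √(B / ε)⌉₊
  have hk₁ : ε ≤ z k₁ := by
    have hpow : ε ≤ a * 2 ^ k₁ := by
      have := le_pow_toNat_ceil_logb one_lt_two (div_pos hε ha).le
      rw [Nat.cast_ofNat, div_le_iff₀ ha] at this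
      linarith
    simpa [hz0, min_eq_right hpow] using min_mul_two_pow_le_grid hzs (hz0 ▸ ha.le) k₁
  have hsqrtB : √B ≤ √(z (k₁ + k₂)) :=
    calc √B = √(B / ε) * √ε := by rw [← Real.sqrt_mul' _ hε.le, div_mul_cancel₀ _ hε.ne']
      _ ≤ k₂ * √ε / 4 := by
        have := Nat.le_ceil (4 * √(B / ε))
        nlinarith [Real.sqrt_nonneg ε]
      _ ≤ √(z (k₁ + k₂)) := nat_mul_sqrt_div_four_le_sqrt_grid hzs hε.le hk₁ k₂
  exact (Real.sqrt_le_sqrt_iff (hε.le.trans (hk₁.trans (grid_monotone hzs le_self_add)))).1 hsqrtB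

/-- the grid sequence reaches B after
max(0, ⌈log₂(ε/a)⌉) + ⌈4·√(B/ε)⌉ steps. -/
theorem stmt_15 (ε a B : ℝ) (hε : 0 < ε) (ha : 0 < a) (hB : 0 < B)
    (z : ℕ → ℝ) (hz0 : z 0 = a)
    (hzs : ∀ i : ℕ, z (i + 1) = z i + Real.sqrt (ε * z i)) :
    B ≤ z (⌈Real.logb 2 (ε / a)⌉.toNat + ⌈4 * Real.sqrt (B / ε)⌉₊) :=
  stmt_15_general ε a B hε ha z hz0 hzs
end
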